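/- Let g be a complex Lie algebra, X a compact Riemann surface of genus g ≥ 2, and δ ∈ g ⊗ H^0(X,K_X). If the image of the map g^* → H^0(X,K_X) corresponding to δ contains a subspace W such that the multiplication map H^0(X,K_X) ⊗ W → H^0(X,K_X^2) is surjective, then the induced map M(δ)_* : H^1(X,T_X) → H^1(X,O_X) ⊗ g is injective. -/
import Mathlib


/- STATEMENT 11: Let 𝔤 be a complex Lie algebra, X a compact Riemann surface
of genus g ≥ 2, and δ ∈ 𝔤 ⊗ H⁰(X,K_X).  If the image of the map
𝔤^* → H⁰(X,K_X) corresponding to δ contains a subspace W for which the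
multiplication map H⁰(K_X) ⊗ W → H⁰(K_X²) is surjective, then the induced
map M(δ)_* : H¹(X,T_X) → H¹(X,O_X) ⊗ 𝔤 is injective.
Here M(δ)_* μ = (id_𝔤 ⊗ Θ(μ,·)) δ ∈ 𝔤 ⊗ H¹(O_X), with Θ the cup product
compatible with Serre duality (sT, sO) and mul. -/
theorem Mdelta_injective_of_image_contains_W
    (g : ℕ) (hg : 2 ≤ g)
    (𝔤 : Type) [LieRing 𝔤] [LieAlgebra ℂ 𝔤] [FiniteDimensional ℂ 𝔤]
    (H0K H0K2 H1T H1O : Type)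
    [AddCommGroup H0K] [Module ℂ H0K] [FiniteDimensional ℂ H0K]
    [AddCommGroup H0K2] [Module ℂ H0K2] [FiniteDimensional ℂ H0K2]
    [AddCommGroup H1T] [Module ℂ H1T] [FiniteDimensional ℂ H1T]
    [AddCommGroup H1O] [Module ℂ H1O] [FiniteDimensional ℂ H1O]
    (hK : Module.finrank ℂ H0K = g)            -- h⁰(K_X) = g
    (mul : H0K →ₗ[ℂ] H0K →ₗ[ℂ] H0K2)           -- multiplication of 1-forms
    (Θ : H1T →ₗ[ℂ] H0K →ₗ[ℂ] H1O)              -- cup product pairing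
    (sT : H1T ≃ₗ[ℂ] Module.Dual ℂ H0K2)        -- Serre duality H¹(T_X) ≅ H⁰(K_X²)^*
    (sO : H1O ≃ₗ[ℂ] Module.Dual ℂ H0K)         -- Serre duality H¹(O_X) ≅ H⁰(K_X)^*
    (hcompat : ∀ (μ : H1T) (ω η : H0K), sO (Θ μ ω) η = sT μ (mul η ω))
    (δ : TensorProduct ℂ 𝔤 H0K)
    (W : Submodule ℂ H0K)
    -- the image of 𝔤^* → H⁰(K_X) corresponding to δ contains W :
    (hWim : (W : Set H0K) ⊆ Set.range (fun f : Module.Dual ℂ 𝔤 =>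
        (TensorProduct.lid ℂ H0K)
          ((TensorProduct.map f (LinearMap.id : H0K →ₗ[ℂ] H0K)) δ)))
    -- the multiplication map H⁰(K_X) ⊗ W → H⁰(K_X²) is surjective :
    (hWsurj : Submodule.span ℂ {z : H0K2 | ∃ (a : H0K), ∃ w ∈ W, z = mul a w} = ⊤) :
    Function.Injective (fun μ : H1T =>
      (TensorProduct.map (LinearMap.id : 𝔤 →ₗ[ℂ] 𝔤) (Θ μ)) δ) := by
  have key : ∀ μ : H1T, (TensorProduct.map (LinearMap.id : 𝔤 →ₗ[ℂ] 𝔤) (Θ μ)) δ = 0 → μ = 0 := by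
    intro μ hμ
    -- Θ μ vanishes on W
    have hΘw : ∀ w ∈ W, Θ μ w = 0 := by
      intro w hw
      obtain ⟨f, hf⟩ := hWim hw
      have hcomm : ∀ t : TensorProduct ℂ 𝔤 H0K,
          Θ μ ((TensorProduct.lid ℂ H0K)
            ((TensorProduct.map f (LinearMap.id : H0K →ₗ[ℂ] H0K)) t))
          = (TensorProduct.lid ℂ H1O)
            ((TensorProduct.map f (LinearMap.id : H1O →ₗ[ℂ] H1O))
              ((TensorProduct.map (LinearMap.id : 𝔤 →ₗ[ℂ] 𝔤) (Θ μ)) t)) := by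
        intro t
        induction t using TensorProduct.induction_on with
        | zero => simp
        | tmul x y => simp
        | add a b ha hb => simp only [map_add, ha, hb]
      calc Θ μ w = Θ μ ((TensorProduct.lid ℂ H0K)
              ((TensorProduct.map f (LinearMap.id : H0K →ₗ[ℂ] H0K)) δ)) := congrArg (Θ μ) hf.symm
        _ = (TensorProduct.lid ℂ H1O)
              ((TensorProduct.map f (LinearMap.id : H1O →ₗ[ℂ] H1O))
                ((TensorProduct.map (LinearMap.id : 𝔤 →ₗ[ℂ] 𝔤) (Θ μ)) δ)) := hcomm δ
        _ = 0 := by rw [hμ]; simp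
    -- sT μ vanishes on all of H0K2
    have hsT : sT μ = 0 := by
      have hle : Submodule.span ℂ {z : H0K2 | ∃ (a : H0K), ∃ w ∈ W, z = mul a w}
          ≤ LinearMap.ker (sT μ) := by
        apply Submodule.span_le.mpr
        rintro z ⟨a, w, hw, rfl⟩
        have h1 : sO (Θ μ w) a = sT μ (mul a w) := hcompat μ w a
        have h2 : Θ μ w = 0 := hΘw w hw
        simp only [LinearMap.mem_ker, SetLike.mem_coe]
        rw [← h1, h2]; simp
      rw [hWsurj] at hle
      ext z
      simpa using hle (Submodule.mem_top (x := z))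
    have : sT μ = sT 0 := by simpa using hsT
    exact sT.injective this
  intro μ₁ μ₂ h
  have hsub : (TensorProduct.map (LinearMap.id : 𝔤 →ₗ[ℂ] 𝔤) (Θ (μ₁ - μ₂))) δ = 0 := by
    have hmap : TensorProduct.map (LinearMap.id : 𝔤 →ₗ[ℂ] 𝔤) (Θ (μ₁ - μ₂))
        = TensorProduct.map (LinearMap.id : 𝔤 →ₗ[ℂ] 𝔤) (Θ μ₁)
          - TensorProduct.map (LinearMap.id : 𝔤 →ₗ[ℂ] 𝔤) (Θ μ₂) := by
      rw [map_sub Θ μ₁ μ₂]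
      exact LinearMap.lTensor_sub (M := 𝔤) (Θ μ₁) (Θ μ₂)
    rw [hmap, LinearMap.sub_apply, sub_eq_zero]
    exact h
  exact sub_eq_zero.mp (key (μ₁ - μ₂) hsub)
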